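/- arXiv:math/0701519 — 5 statements merged into one kernel-verified Lean document; each statement's English description precedes it below -/
import Mathlib

section
/- Let f be a standardly semilinear n-quasigroup of order 4 with n ≥ 3. If there exist distinct indices i,j ∈ {0,…,n} and non-identity permutations μ,ν of {0,1,2,3} with (μ,ν) ≠ (π,π), where π = (1,0,3,2), such that f⟨x̄⟩ = f⟨x̄ with xᵢ ↦ μ(xᵢ), xⱼ ↦ ν(xⱼ)⟩ for all x̄, then f is permutably reducible. -/
/-- An `n`-ary quasigroup: uniquely invertible in each place. -/
def IsNQuasigroup {n : ℕ} {S : Type*} (f : (Fin n → S) → S) : Prop :=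
  ∀ (i : Fin n) (x : Fin n → S), Function.Bijective fun a => f (Function.update x i a)

/-- Permutable reducibility (Definition 1.4). -/
def PermutablyReducible {n : ℕ} {S : Type*} (f : (Fin n → S) → S) : Prop :=
  ∃ (m : ℕ) (_ : 2 ≤ m) (_ : m ≤ n - 1)
    (σ : Equiv.Perm (Fin n))
    (g : (Fin m → S) → S)
    (h : (Fin (n - m + 1) → S) → S),
    IsNQuasigroup g ∧ IsNQuasigroup h ∧
    ∀ x : Fin n → S,
      f x = h (Fin.cons (g fun k : Fin m => x (σ ⟨k.val, by have := k.isLt; omega⟩))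
                 fun j : Fin (n - m) => x (σ ⟨m + j.val, by have := j.isLt; omega⟩))

/-- `l(0)=l(1)=0`, `l(2)=l(3)=1`. -/
def lmap : Fin 4 → ZMod 2 := ![0, 0, 1, 1]

/-- Standardly semilinear: the predicate of `f` is pointwise `≤ L`. -/
def StdSemilinear {n : ℕ} (f : (Fin n → Fin 4) → Fin 4) : Prop :=
  ∀ x : Fin n → Fin 4, lmap (f x) = ∑ i, lmap (x i)

def Semilinear {n : ℕ} (f : (Fin n → Fin 4) → Fin 4) : Prop :=
  ∃ (g : (Fin n → Fin 4) → Fin 4) (τ₀ : Equiv.Perm (Fin 4)) (τ : Fin n → Equiv.Perm (Fin 4)),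
    IsNQuasigroup g ∧ StdSemilinear g ∧ ∀ x, τ₀ (f x) = g fun i => τ i (x i)

noncomputable def PrincipalRetract {n k : ℕ} {S : Type*} (f : (Fin n → S) → S) (ι : Fin k → Fin n)
    (c : Fin n → S) : (Fin k → S) → S :=
  fun y => f (Function.extend ι y c)

def IsBinaryQG {S : Type*} (h : S → S → S) : Prop :=
  (∀ a, Function.Bijective (h a)) ∧ ∀ b, Function.Bijective fun a => h a b

def CondA {n : ℕ} {C : Type*} (μ : Fin n → Fin n → C) : Prop :=
  ∀ a b c : Fin n, a ≠ b → a ≠ c → b ≠ c →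
    μ a b = μ a c ∨ μ a b = μ b c ∨ μ a c = μ b c

def CondB {n : ℕ} {C : Type*} [DecidableEq C] (μ : Fin n → Fin n → C) : Prop :=
  ∀ a b c d : Fin n, a ≠ b → a ≠ c → a ≠ d → b ≠ c → b ≠ d → c ≠ d →
    (∃ c₁ c₂ : C, c₁ ≠ c₂ ∧
      [μ a b, μ a c, μ a d, μ b c, μ b d, μ c d].count c₁ = 3 ∧
      [μ a b, μ a c, μ a d, μ b c, μ b d, μ c d].count c₂ = 3) →
    ((μ a b = μ a c ∧ μ a c = μ b c) ∨ (μ a b = μ a d ∧ μ a d = μ b d) ∨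
     (μ a c = μ a d ∧ μ a d = μ c d) ∨ (μ b c = μ b d ∧ μ b d = μ c d))

def colorOf {n : ℕ} (f : (Fin n → Fin 4) → Fin 4) (i j : Fin n) : Fin 4 → Fin 4 → Fin 4 :=
  fun a b => f fun t => if t = i then a else if t = j then b else 0

def Normalized {n : ℕ} (f : (Fin n → Fin 4) → Fin 4) : Prop :=
  ∀ (i : Fin n) (a : Fin 4), f (fun t => if t = i then a else 0) = a

def piPerm : Fin 4 → Fin 4 := ![1, 0, 3, 2]

/-- The permutation `π = (1,0,3,2)` as a permutation of `Fin 4`. -/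
def piEquiv : Equiv.Perm (Fin 4) := Equiv.swap 0 1 * Equiv.swap 2 3

namespace S14
def smap : Fin 4 → ZMod 2 := ![0, 1, 0, 1]
def dd (μ : Equiv.Perm (Fin 4)) (a : Fin 4) : ZMod 2 := lmap (μ a) + lmap a
def ee (μ : Equiv.Perm (Fin 4)) (a : Fin 4) : ZMod 2 := smap (μ a) + smap a
lemma pt_id (u v : Fin 4) (h1 : lmap u + lmap v = 0) (h2 : smap u + smap v = 0) : u = v := by
  revert h1 h2; revert u v; decide
lemma pt_pi (u v : Fin 4) (h1 : lmap u + lmap v = 0) (h2 : smap u + smap v = 1) : u = piEquiv v := by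
  revert h1 h2; revert u v; decide
lemma perm_id (μ : Equiv.Perm (Fin 4)) (h1 : ∀ a, dd μ a = 0) (h2 : ∀ a, ee μ a = 0) : μ = 1 := by
  apply Equiv.ext; intro a; simpa using pt_id (μ a) a (h1 a) (h2 a)
lemma perm_pi (μ : Equiv.Perm (Fin 4)) (h1 : ∀ a, dd μ a = 0) (h2 : ∀ a, ee μ a = 1) : μ = piEquiv := by
  apply Equiv.ext; intro a; exact pt_pi (μ a) a (h1 a) (h2 a)

lemma sum_update {m : ℕ} (F : Fin 4 → ZMod 2) (x : Fin m → Fin 4) (i : Fin m) (b : Fin 4) :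
    ∑ t, F (Function.update x i b t) = (∑ t, F (x t)) + F b + F (x i) := by
  have h1 : ∀ t, F (Function.update x i b t) = Function.update (fun t => F (x t)) i (F b) t := by
    intro t
    simp only [Function.update_apply]
    split <;> simp_all
  rw [Finset.sum_congr rfl fun t _ => h1 t, Finset.sum_update_of_mem (Finset.mem_univ i)]
  rw [← Finset.erase_eq, ← Finset.add_sum_erase Finset.univ (fun t => F (x t)) (Finset.mem_univ i)]
  have h2 : (2 : ZMod 2) = 0 := rfl
  linear_combination (-(F (x i))) * h2
def StdSemilinear {n : ℕ} (f : (Fin n → Fin 4) → Fin 4) : Prop :=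
  ∀ x : Fin n → Fin 4, lmap (f x) = ∑ i, lmap (x i)
def enc (p q : ZMod 2) : Fin 4 :=
  if p = 0 then (if q = 0 then 0 else 1) else (if q = 0 then 2 else 3)
lemma lmap_enc (p q : ZMod 2) : lmap (enc p q) = p := by revert p q; decide
lemma smap_enc (p q : ZMod 2) : smap (enc p q) = q := by revert p q; decide
lemma enc_lmap_smap (a : Fin 4) : enc (lmap a) (smap a) = a := by revert a; decide
lemma ext4 (a b : Fin 4) (h1 : lmap a = lmap b) (h2 : smap a = smap b) : a = b := by
  revert h1 h2; revert a b; decide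
lemma z2cases (a : ZMod 2) : a = 0 ∨ a = 1 := by revert a; decide
lemma z2add (a : ZMod 2) : a + a = 0 := by revert a; decide
lemma two0 : (2 : ZMod 2) = 0 := rfl
lemma diff_smap (u v : Fin 4) (hne : u ≠ v) (hl : lmap u = lmap v) : smap u = smap v + 1 := by
  revert hne hl; revert u v; decide

def NF {m : ℕ} (Λ : (Fin m → ZMod 2) → ZMod 2) (x : Fin m → Fin 4) : Fin 4 :=
  enc (∑ t, lmap (x t)) ((∑ t, smap (x t)) + Λ (fun t => lmap (x t)))

lemma enc_inj {p q p' q' : ZMod 2} (h : enc p q = enc p' q') : p = p' ∧ q = q' :=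
  ⟨by rw [← lmap_enc p q, h, lmap_enc], by rw [← smap_enc p q, h, smap_enc]⟩

section chain
variable {n : ℕ} (f : (Fin n → Fin 4) → Fin 4)

lemma key_step (hq : IsNQuasigroup f) (hs : StdSemilinear f) (x : Fin n → Fin 4)
    (t : Fin n) (b : Fin 4) (hb : lmap b = lmap (x t)) :
    smap (f (Function.update x t b)) + ∑ k, smap (Function.update x t b k)
      = smap (f x) + ∑ k, smap (x k) := by
  by_cases hbx : b = x t
  · rw [hbx, Function.update_eq_self]
  · have h1 : lmap (f (Function.update x t b)) = lmap (f x) := by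
      rw [hs, hs, sum_update lmap x t b, hb]
      linear_combination (lmap (x t)) * two0
    have h2 : f (Function.update x t b) ≠ f x := by
      intro h
      apply hbx
      exact (hq t x).1 (a₁ := b) (a₂ := x t) (by simpa [Function.update_eq_self] using h)
    have h3 : smap (f (Function.update x t b)) = smap (f x) + 1 := diff_smap _ _ h2 h1
    rw [h3, sum_update smap x t b, diff_smap b (x t) hbx hb]
    linear_combination (smap (x t) + 1) * two0

def hyb (x y : Fin n → Fin 4) (k : ℕ) : Fin n → Fin 4 :=
  fun t => if (t : ℕ) < k then y t else x t

lemma chain (hq : IsNQuasigroup f) (hs : StdSemilinear f) (x y : Fin n → Fin 4)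
    (hxy : ∀ t, lmap (x t) = lmap (y t)) :
    smap (f y) + ∑ k, smap (y k) = smap (f x) + ∑ k, smap (x k) := by
  have main : ∀ k : ℕ, smap (f (hyb x y k)) + ∑ s, smap (hyb x y k s)
      = smap (f x) + ∑ k, smap (x k) := by
    intro k
    induction k with
    | zero =>
      have : hyb x y 0 = x := by funext t; simp [hyb]
      rw [this]
    | succ k ih =>
      by_cases hk : k < n
      · have he : hyb x y (k + 1)
            = Function.update (hyb x y k) ⟨k, hk⟩ (y ⟨k, hk⟩) := by
          funext t
          rw [Function.update_apply]
          by_cases ht : t = ⟨k, hk⟩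
          · subst ht; simp [hyb]
          · have hne : (t : ℕ) ≠ k := fun h => ht (Fin.ext h)
            rw [if_neg ht]
            show (if (t : ℕ) < k + 1 then y t else x t) = (if (t : ℕ) < k then y t else x t)
            by_cases hlt : (t : ℕ) < k
            · rw [if_pos (by omega), if_pos hlt]
            · rw [if_neg (by omega), if_neg hlt]
        have hbase : lmap (y ⟨k, hk⟩) = lmap (hyb x y k ⟨k, hk⟩) := by
          have : hyb x y k ⟨k, hk⟩ = x ⟨k, hk⟩ := by simp [hyb]
          rw [this, hxy ⟨k, hk⟩]
        rw [he, key_step f hq hs _ ⟨k, hk⟩ (y ⟨k, hk⟩) hbase]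
        exact ih
      · have he : hyb x y (k + 1) = hyb x y k := by
          funext t; have := t.isLt
          show (if (t : ℕ) < k + 1 then y t else x t) = if (t : ℕ) < k then y t else x t
          rw [if_pos (by omega), if_pos (by omega)]
        rw [he]; exact ih
  have hn' : hyb x y n = y := by
    funext t; exact if_pos t.isLt
  have := main n
  rwa [hn'] at this

lemma nf_exists (hq : IsNQuasigroup f) (hs : StdSemilinear f) :
    ∃ Λ : (Fin n → ZMod 2) → ZMod 2, ∀ x, f x = NF Λ x := by
  refine ⟨fun M => smap (f (fun t => enc (M t) 0)), fun x => ?_⟩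
  have hc := chain f hq hs (fun t => enc (lmap (x t)) 0) x (fun t => by rw [lmap_enc])
  have hz : ∑ k, smap ((fun t => enc (lmap (x t)) 0) k) = 0 := by
    simp [smap_enc]
  rw [hz, add_zero] at hc
  have hsx : smap (f x) = (∑ k, smap (x k)) + smap (f fun t => enc (lmap (x t)) 0) := by
    linear_combination hc + (-(∑ k, smap (x k) : ZMod 2)) * two0
  rw [← enc_lmap_smap (f x), hsx, hs x]
  rfl

end chain

lemma nf_qg {m : ℕ} (Λ : (Fin m → ZMod 2) → ZMod 2) : IsNQuasigroup (NF Λ) := by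
  intro i x
  rw [← Finite.injective_iff_bijective]
  intro a b hab
  simp only [NF] at hab
  obtain ⟨hl, hsq⟩ := enc_inj hab
  rw [sum_update lmap x i a, sum_update lmap x i b] at hl
  have hlab : lmap a = lmap b := by linear_combination hl
  have hM : (fun t => lmap (Function.update x i a t)) = (fun t => lmap (Function.update x i b t)) := by
    funext t
    rw [Function.update_apply, Function.update_apply]
    split <;> simp [hlab]
  rw [hM, sum_update smap x i a, sum_update smap x i b] at hsq
  have hsab : smap a = smap b := by linear_combination hsq
  exact ext4 a b hlab hsab

lemma sum_split {N m : ℕ} (hm : m ≤ N) (F : Fin N → ZMod 2) :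
    ∑ t, F t = (∑ k : Fin m, F ⟨k.val, by have := k.isLt; omega⟩)
      + ∑ j : Fin (N - m), F ⟨m + j.val, by have := j.isLt; omega⟩ := by
  have e : N = m + (N - m) := by omega
  have h0 : ∑ t, F t = ∑ t : Fin (m + (N - m)), F (Fin.cast e.symm t) :=
    (Fintype.sum_equiv (finCongr e.symm) _ F (fun t => rfl)).symm
  rw [h0, Fin.sum_univ_add]
  rfl

lemma reducible_of_split {n : ℕ} (f : (Fin n → Fin 4) → Fin 4)
    (Λ : (Fin n → ZMod 2) → ZMod 2) (hf : ∀ x, f x = NF Λ x)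
    (m : ℕ) (h2 : 2 ≤ m) (hm1 : m ≤ n - 1) (hn1 : 1 ≤ n) (σ : Equiv.Perm (Fin n))
    (α : (Fin m → ZMod 2) → ZMod 2) (β : ZMod 2 → (Fin (n - m) → ZMod 2) → ZMod 2)
    (hsplit : ∀ M : Fin n → ZMod 2,
      Λ M = α (fun k : Fin m => M (σ ⟨k.val, by have := k.isLt; omega⟩))
          + β (∑ k : Fin m, M (σ ⟨k.val, by have := k.isLt; omega⟩))
              (fun j : Fin (n - m) => M (σ ⟨m + j.val, by have := j.isLt; omega⟩))) :
    PermutablyReducible f := by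
  have hmn : m ≤ n := by omega
  refine ⟨m, h2, hm1, σ, NF α, NF (fun w => β (w 0) (fun j => w j.succ)), nf_qg α, nf_qg _, ?_⟩
  intro x
  set G : Fin 4 := NF α (fun k : Fin m => x (σ ⟨k.val, by have := k.isLt; omega⟩)) with hG
  rw [hf x]
  show NF Λ x = NF _ (Fin.cons G (fun j : Fin (n - m) => x (σ ⟨m + j.val, by have := j.isLt; omega⟩)))
  have hsum : ∀ (F : Fin 4 → ZMod 2),
      ∑ t : Fin (n - m + 1), F ((Fin.cons G (fun j : Fin (n - m) => x (σ ⟨m + j.val, by have := j.isLt; omega⟩)) : Fin (n - m + 1) → Fin 4) t)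
      = F G + ∑ j : Fin (n - m), F (x (σ ⟨m + j.val, by have := j.isLt; omega⟩)) := by
    intro F
    rw [Fin.sum_univ_succ]
    simp only [Fin.cons_zero, Fin.cons_succ]
  have hl : ∀ (F : Fin 4 → ZMod 2), ∑ t, F (x t)
      = (∑ k : Fin m, F (x (σ ⟨k.val, by have := k.isLt; omega⟩)))
      + ∑ j : Fin (n - m), F (x (σ ⟨m + j.val, by have := j.isLt; omega⟩)) := by
    intro F
    rw [← Equiv.sum_comp σ (fun t => F (x t))]
    exact sum_split hmn _
  have hGl : lmap G = ∑ k : Fin m, lmap (x (σ ⟨k.val, by have := k.isLt; omega⟩)) := by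
    rw [hG]; exact lmap_enc _ _
  have hGs : smap G = (∑ k : Fin m, smap (x (σ ⟨k.val, by have := k.isLt; omega⟩)))
      + α (fun k : Fin m => lmap (x (σ ⟨k.val, by have := k.isLt; omega⟩))) := by
    rw [hG]; exact smap_enc _ _
  show enc _ _ = enc _ _
  have harg : (fun t : Fin (n - m + 1) => lmap ((Fin.cons G (fun j : Fin (n - m) => x (σ ⟨m + j.val, by have := j.isLt; omega⟩)) : Fin (n - m + 1) → Fin 4) t))
      = Fin.cons (lmap G) (fun j : Fin (n - m) => lmap (x (σ ⟨m + j.val, by have := j.isLt; omega⟩))) := by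
    funext t
    refine Fin.cases ?_ ?_ t
    · simp
    · intro t'; simp
  congr 1
  · rw [hsum lmap, hGl]
    exact hl lmap
  · rw [hsum smap, hGs, harg]
    have : (fun w : Fin (n - m + 1) → ZMod 2 => β (w 0) (fun j => w j.succ))
        (Fin.cons (lmap G) (fun j : Fin (n - m) => lmap (x (σ ⟨m + j.val, by have := j.isLt; omega⟩))))
        = β (lmap G) (fun j : Fin (n - m) => lmap (x (σ ⟨m + j.val, by have := j.isLt; omega⟩))) := by
      simp only [Fin.cons_zero, Fin.cons_succ]
    rw [this, hl smap, hsplit (fun t => lmap (x t)), hGl]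
    ring

section zres
variable (a b c d e g h k : ZMod 2)
lemma zB (h1 : a + b = 0) : a = b := by revert a b h1; decide
lemma z11 : a + 1 + 1 = a := by revert a; decide
lemma zres1 (h1 : a = a + b + c + d + e) : b + c + (d + e) = 0 := by
  revert a b c d e h1; decide
lemma zres2 (h1 : a + b = 0) (h2 : a + c = 0) : c = b := by revert a b c h1 h2; decide
lemma zres5 (h1 : a + b = a + c + d + e + g + h) : h = b + (c + d) + (e + g) := by
  revert a b c d e g h h1; decide
lemma zres7 (h1 : a = a + b + c) : b + c = 0 := by revert a b c h1; decide
lemma zres8 (h1 : a + b = 1) : a = b + 1 := by revert a b h1; decide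
lemma zres9 (h1 : a = b + c + d) (h2 : a = b + e + d) : c = e := by
  revert a b c d e h1 h2; decide
lemma zres9b (h1 : a = b + c + d) (h2 : a = b + c + e) : d = e := by
  revert a b c d e h1 h2; decide
lemma zresK (h1 : a = b + c + d) (h2 : b = a + e + g) : c + d + e + g = 0 := by
  revert a b c d e g h1 h2; decide
lemma zres11 : b = c + (b + c) := by revert b c; decide
lemma zout1 (h1 : a = b + c + d) (h2 : e = b) : a + e = c + d := by
  revert a b c d e h1 h2; decide
lemma zout2 (h1 : a = b + c + d + e) (h2 : g = b + k) : e = k + (a + g) + (c + d) := by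
  revert a b c d e g k h1 h2; decide
lemma zfin (hK : a + b + c + d = 0) (hF : e = g + a + b) : e = c + d + g := by
  revert a b c d e g hK hF; decide
end zres

lemma upd2_sum {n : ℕ} (F : Fin 4 → ZMod 2) (x : Fin n → Fin 4) (i' j' : Fin n)
    (hij : i' ≠ j') (a b : Fin 4) :
    ∑ t, F (Function.update (Function.update x j' b) i' a t)
      = (∑ t, F (x t)) + F a + F (x i') + F b + F (x j') := by
  rw [sum_update F _ i' a, sum_update F x j' b, Function.update_of_ne hij]
  ring

def U2 {n : ℕ} (i' j' : Fin n) (M : Fin n → ZMod 2) : Fin n → ZMod 2 :=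
  Function.update (Function.update M j' (M j' + 1)) i' (M i' + 1)

lemma U2_i {n : ℕ} (i' j' : Fin n) (M : Fin n → ZMod 2) : U2 i' j' M i' = M i' + 1 :=
  Function.update_self _ _ _

lemma U2_j {n : ℕ} (i' j' : Fin n) (hij : i' ≠ j') (M : Fin n → ZMod 2) :
    U2 i' j' M j' = M j' + 1 := by
  rw [U2, Function.update_of_ne hij.symm, Function.update_self]

lemma U2_other {n : ℕ} (i' j' : Fin n) (M : Fin n → ZMod 2) (t : Fin n)
    (h1 : t ≠ i') (h2 : t ≠ j') : U2 i' j' M t = M t := by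
  rw [U2, Function.update_of_ne h1, Function.update_of_ne h2]

lemma U2_U2 {n : ℕ} (i' j' : Fin n) (hij : i' ≠ j') (M : Fin n → ZMod 2) :
    U2 i' j' (U2 i' j' M) = M := by
  funext t
  by_cases h1 : t = i'
  · subst h1; rw [U2_i, U2_i, z11]
  · by_cases h2 : t = j'
    · subst h2; rw [U2_j _ _ hij, U2_j _ _ hij, z11]
    · rw [U2_other _ _ _ _ h1 h2, U2_other _ _ _ _ h1 h2]

def EE (μ : Equiv.Perm (Fin 4)) (p : ZMod 2) : ZMod 2 := smap (μ (enc p 0)) + smap (enc p 0)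

lemma case_inputs {n : ℕ} (hn : 3 ≤ n) (f : (Fin n → Fin 4) → Fin 4)
    (Λ : (Fin n → ZMod 2) → ZMod 2) (hf : ∀ x, f x = NF Λ x)
    (i' j' : Fin n) (hij : i' ≠ j') (μ ν : Equiv.Perm (Fin 4))
    (hμ : μ ≠ 1) (hν : ν ≠ 1) (hμν : ¬(μ = piEquiv ∧ ν = piEquiv))
    (heq : ∀ x : Fin n → Fin 4,
      f x = f (Function.update (Function.update x j' (ν (x j'))) i' (μ (x i')))) :
    PermutablyReducible f := by
  classical
  have Hcomp : ∀ x : Fin n → Fin 4,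
      ((∑ t, lmap (x t)) = (∑ t, lmap (x t)) + lmap (μ (x i')) + lmap (x i')
          + lmap (ν (x j')) + lmap (x j'))
      ∧ ((∑ t, smap (x t)) + Λ (fun t => lmap (x t))
         = ((∑ t, smap (x t)) + smap (μ (x i')) + smap (x i') + smap (ν (x j')) + smap (x j'))
           + Λ (fun t => lmap ((Function.update (Function.update x j' (ν (x j'))) i' (μ (x i'))) t))) := by
    intro x
    have h := (hf x).symm.trans ((heq x).trans (hf _))
    obtain ⟨h1, h2⟩ := enc_inj h
    rw [upd2_sum lmap x i' j' hij] at h1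
    rw [upd2_sum smap x i' j' hij] at h2
    exact ⟨h1, h2⟩
  -- realize arbitrary values at i', j'
  have real : ∀ a b : Fin 4, ∃ x : Fin n → Fin 4, x i' = a ∧ x j' = b := by
    intro a b
    refine ⟨Function.update (Function.update (fun _ => 0) i' a) j' b, ?_, ?_⟩
    · rw [Function.update_of_ne hij, Function.update_self]
    · rw [Function.update_self]
  have Hd : ∀ a b : Fin 4, lmap (μ a) + lmap a + (lmap (ν b) + lmap b) = 0 := by
    intro a b
    obtain ⟨x, hxi, hxj⟩ := real a b
    have h := (Hcomp x).1
    rw [hxi, hxj] at h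
    exact zres1 _ _ _ _ _ h
  have hdν : ∀ b, lmap (ν b) + lmap b = lmap (ν 0) + lmap (0 : Fin 4) := by
    intro b
    have h0 := Hd 0 0
    have hb := Hd 0 b
    exact zres2 _ _ _ h0 hb
  have hdμ : ∀ a, lmap (μ a) + lmap a = lmap (ν 0) + lmap (0 : Fin 4) := by
    intro a
    have := Hd a 0
    exact zB _ _ (by linear_combination this)
  have HQ : ∀ x : Fin n → Fin 4,
      Λ (fun t => lmap ((Function.update (Function.update x j' (ν (x j'))) i' (μ (x i'))) t))
      = Λ (fun t => lmap (x t)) + (smap (μ (x i')) + smap (x i'))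
        + (smap (ν (x j')) + smap (x j')) := by
    intro x
    exact zres5 _ _ _ _ _ _ _ (Hcomp x).2
  rcases z2cases (lmap (ν 0) + lmap (0 : Fin 4)) with hc0 | hc1
  · -- degenerate case: contradiction with hμ/hν/hμν
    exfalso
    have hMx : ∀ x : Fin n → Fin 4,
        (fun t => lmap ((Function.update (Function.update x j' (ν (x j'))) i' (μ (x i'))) t))
        = fun t => lmap (x t) := by
      intro x; funext t
      rw [Function.update_apply, Function.update_apply]
      by_cases h1 : t = i'
      · subst h1; rw [if_pos rfl]
        exact zB _ _ ((hdμ (x t)).trans hc0)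
      · rw [if_neg h1]
        by_cases h2 : t = j'
        · subst h2; rw [if_pos rfl]
          exact zB _ _ ((hdν (x t)).trans hc0)
        · rw [if_neg h2]
    have Hee : ∀ a b : Fin 4, (smap (μ a) + smap a) + (smap (ν b) + smap b) = 0 := by
      intro a b
      obtain ⟨x, hxi, hxj⟩ := real a b
      have h := HQ x
      rw [hMx x, hxi, hxj] at h
      exact zres7 _ _ _ h
    have heν : ∀ b, smap (ν b) + smap b = smap (ν 0) + smap (0 : Fin 4) := by
      intro b; exact zres2 _ _ _ (Hee 0 0) (Hee 0 b)
    have heμ : ∀ a, smap (μ a) + smap a = smap (ν 0) + smap (0 : Fin 4) := by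
      intro a; exact zB _ _ (by linear_combination Hee a 0)
    rcases z2cases (smap (ν 0) + smap (0 : Fin 4)) with he0 | he1
    · apply hμ
      apply perm_id
      · intro a; show lmap (μ a) + lmap a = 0; rw [hdμ a, hc0]
      · intro a; show smap (μ a) + smap a = 0; rw [heμ a, he0]
    · apply hμν
      constructor
      · apply perm_pi
        · intro a; show lmap (μ a) + lmap a = 0; rw [hdμ a, hc0]
        · intro a; show smap (μ a) + smap a = 1; rw [heμ a, he1]
      · apply perm_pi
        · intro a; show lmap (ν a) + lmap a = 0; rw [hdν a, hc0]
        · intro a; show smap (ν a) + smap a = 1; rw [heν a, he1]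
  · -- main case: both μ and ν flip the linear part
    have hdμ1 : ∀ a, lmap (μ a) = lmap a + 1 := fun a => zres8 _ _ ((hdμ a).trans hc1)
    have hdν1 : ∀ b, lmap (ν b) = lmap b + 1 := fun b => zres8 _ _ ((hdν b).trans hc1)
    have hArg : ∀ x : Fin n → Fin 4,
        (fun t => lmap ((Function.update (Function.update x j' (ν (x j'))) i' (μ (x i'))) t))
        = U2 i' j' (fun t => lmap (x t)) := by
      intro x; funext t
      rw [Function.update_apply]
      by_cases h1 : t = i'
      · subst h1; rw [if_pos rfl, U2_i, hdμ1]
      · rw [if_neg h1, Function.update_apply]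
        by_cases h2 : t = j'
        · subst h2; rw [if_pos rfl, U2_j _ _ hij, hdν1]
        · rw [if_neg h2, U2_other _ _ _ _ h1 h2]
    have HQ' : ∀ x : Fin n → Fin 4,
        Λ (U2 i' j' (fun t => lmap (x t)))
        = Λ (fun t => lmap (x t)) + (smap (μ (x i')) + smap (x i'))
          + (smap (ν (x j')) + smap (x j')) := by
      intro x; rw [← hArg x]; exact HQ x
    have HL : ∀ (M : Fin n → ZMod 2) (a b : Fin 4), lmap a = M i' → lmap b = M j' →
        Λ (U2 i' j' M) = Λ M + (smap (μ a) + smap a) + (smap (ν b) + smap b) := by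
      intro M a b ha hb
      have hxM : (fun t => lmap ((Function.update (Function.update (fun t => enc (M t) 0) i' a) j' b) t)) = M := by
        funext t
        rw [Function.update_apply]
        by_cases h2 : t = j'
        · subst h2; rw [if_pos rfl]; exact hb
        · rw [if_neg h2, Function.update_apply]
          by_cases h1 : t = i'
          · subst h1; rw [if_pos rfl]; exact ha
          · rw [if_neg h1]; exact lmap_enc _ 0
      have hxi : (Function.update (Function.update (fun t => enc (M t) 0) i' a) j' b) i' = a := by
        rw [Function.update_of_ne hij, Function.update_self]
      have hxj : (Function.update (Function.update (fun t => enc (M t) 0) i' a) j' b) j' = b :=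
        Function.update_self _ _ _
      have h := HQ' (Function.update (Function.update (fun t => enc (M t) 0) i' a) j' b)
      rw [hxi, hxj, hxM] at h
      exact h
    have hEμ : ∀ a : Fin 4, smap (μ a) + smap a = EE μ (lmap a) := by
      intro a
      have hMi : (fun t : Fin n => if t = i' then lmap a else 0) i' = lmap a := if_pos rfl
      have hMj : (fun t : Fin n => if t = i' then lmap a else 0) j' = 0 := if_neg (Ne.symm hij)
      have h1 := HL (fun t : Fin n => if t = i' then lmap a else 0) a (enc 0 0)
        hMi.symm (by rw [lmap_enc]; exact hMj.symm)
      have h2 := HL (fun t : Fin n => if t = i' then lmap a else 0) (enc (lmap a) 0) (enc 0 0)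
        (by rw [lmap_enc]; exact hMi.symm) (by rw [lmap_enc]; exact hMj.symm)
      exact zres9 _ _ _ _ _ h1 h2
    have hEν : ∀ b : Fin 4, smap (ν b) + smap b = EE ν (lmap b) := by
      intro b
      have hMi : (fun t : Fin n => if t = j' then lmap b else 0) i' = 0 := if_neg hij
      have hMj : (fun t : Fin n => if t = j' then lmap b else 0) j' = lmap b := if_pos rfl
      have h1 := HL (fun t : Fin n => if t = j' then lmap b else 0) (enc 0 0) b
        (by rw [lmap_enc]; exact hMi.symm) hMj.symm
      have h2 := HL (fun t : Fin n => if t = j' then lmap b else 0) (enc 0 0) (enc (lmap b) 0)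
        (by rw [lmap_enc]; exact hMi.symm) (by rw [lmap_enc]; exact hMj.symm)
      exact zres9b _ _ _ _ _ h1 h2
    have FE : ∀ M : Fin n → ZMod 2, Λ (U2 i' j' M) = Λ M + EE μ (M i') + EE ν (M j') :=
      fun M => HL M (enc (M i') 0) (enc (M j') 0) (lmap_enc _ _) (lmap_enc _ _)
    have K : EE μ 0 + EE ν 0 + EE μ 1 + EE ν 1 = 0 := by
      have h1 := FE (fun _ => 0)
      have h2 := FE (U2 i' j' (fun _ => 0))
      have e1 : U2 i' j' (fun _ : Fin n => (0 : ZMod 2)) i' = 1 := by rw [U2_i]; exact zero_add 1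
      have e2 : U2 i' j' (fun _ : Fin n => (0 : ZMod 2)) j' = 1 := by
        rw [U2_j _ _ hij]; exact zero_add 1
      rw [U2_U2 _ _ hij, e1, e2] at h2
      exact zresK _ _ _ _ _ _ h1 h2
    have h0n : 0 < n := by omega
    have h1n : 1 < n := by omega
    obtain ⟨σ, hσ0, hσ1⟩ : ∃ σ : Equiv.Perm (Fin n), σ ⟨0, h0n⟩ = i' ∧ σ ⟨1, h1n⟩ = j' := by
      refine ⟨Equiv.swap ⟨0, h0n⟩ i' * Equiv.swap ⟨1, h1n⟩ ((Equiv.swap ⟨0, h0n⟩ i').symm j'), ?_, ?_⟩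
      · have hne1 : (⟨0, h0n⟩ : Fin n) ≠ ⟨1, h1n⟩ := by
          intro h; exact absurd (congrArg Fin.val h) (by simp)
        have hne2 : (⟨0, h0n⟩ : Fin n) ≠ (Equiv.swap ⟨0, h0n⟩ i').symm j' := by
          intro h
          apply hij
          have h2 := congrArg (Equiv.swap ⟨0, h0n⟩ i') h
          rw [Equiv.apply_symm_apply, Equiv.swap_apply_left] at h2
          exact h2
        show Equiv.swap ⟨0, h0n⟩ i' (Equiv.swap ⟨1, h1n⟩ _ ⟨0, h0n⟩) = i'
        rw [Equiv.swap_apply_of_ne_of_ne hne1 hne2, Equiv.swap_apply_left]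
      · show Equiv.swap ⟨0, h0n⟩ i' (Equiv.swap ⟨1, h1n⟩ _ ⟨1, h1n⟩) = j'
        rw [Equiv.swap_apply_left, Equiv.apply_symm_apply]
    apply reducible_of_split f Λ hf 2 le_rfl (by omega) (by omega) σ
      (fun v => v 0 * (EE μ (v 0) + EE ν (v 1)))
      (fun p r => Λ (Function.update (Function.update
          (fun t => if h : 2 ≤ ((σ.symm t : Fin n) : ℕ) then
            r ⟨((σ.symm t : Fin n) : ℕ) - 2, by have := (σ.symm t).isLt; omega⟩ else 0) j' 0) i' p)
        + p * (EE μ p + EE ν 0))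
    intro M
    have e0 : ∀ (h : (((0 : Fin 2) : ℕ)) < n), (⟨((0 : Fin 2) : ℕ), h⟩ : Fin n) = ⟨0, h0n⟩ :=
      fun h => Fin.ext (by simp)
    have e1 : ∀ (h : (((1 : Fin 2) : ℕ)) < n), (⟨((1 : Fin 2) : ℕ), h⟩ : Fin n) = ⟨1, h1n⟩ :=
      fun h => Fin.ext (by simp)
    simp only [Fin.sum_univ_two, e0, e1, hσ0, hσ1]
    have key : ∀ B : Fin n → ZMod 2, (∀ t, t ≠ i' → t ≠ j' → B t = M t) →
        Function.update (Function.update B j' 0) i' (M i' + M j')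
          = Function.update (Function.update M j' 0) i' (M i' + M j') := by
      intro B hB; funext t
      rw [Function.update_apply, Function.update_apply, Function.update_apply,
        Function.update_apply]
      by_cases h1 : t = i'
      · rw [if_pos h1, if_pos h1]
      · rw [if_neg h1, if_neg h1]
        by_cases h2 : t = j'
        · rw [if_pos h2, if_pos h2]
        · rw [if_neg h2, if_neg h2]; exact hB t h1 h2
    rw [key]
    case a =>
      intro t h1 h2
      have hs0 : σ.symm t ≠ ⟨0, h0n⟩ := fun h => h1 (by rw [← hσ0, ← h, Equiv.apply_symm_apply])
      have hs1 : σ.symm t ≠ ⟨1, h1n⟩ := fun h => h2 (by rw [← hσ1, ← h, Equiv.apply_symm_apply])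
      have v0 : ((σ.symm t : Fin n) : ℕ) ≠ 0 := fun h => hs0 (Fin.ext h)
      have v1 : ((σ.symm t : Fin n) : ℕ) ≠ 1 := fun h => hs1 (Fin.ext h)
      have hge : 2 ≤ ((σ.symm t : Fin n) : ℕ) := by omega
      show (if h : 2 ≤ ((σ.symm t : Fin n) : ℕ) then
          M (σ ⟨2 + (((σ.symm t : Fin n) : ℕ) - 2), by have := (σ.symm t).isLt; omega⟩) else 0) = M t
      rw [dif_pos hge]
      have he : (⟨2 + (((σ.symm t : Fin n) : ℕ) - 2), by have := (σ.symm t).isLt; omega⟩ : Fin n)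
          = σ.symm t := Fin.ext (by simp; omega)
      rw [he, Equiv.apply_symm_apply]
    rcases z2cases (M j') with hj0 | hj1
    · have hupd : Function.update (Function.update M j' 0) i' (M i' + M j') = M := by
        rw [hj0, add_zero, show (0 : ZMod 2) = M j' from hj0.symm, Function.update_eq_self,
          Function.update_eq_self]
      rw [hupd, hj0, add_zero]
      exact zres11 _ _
    · have hNi : (Function.update (Function.update M j' 0) i' (M i' + M j')) i' = M i' + M j' :=
        Function.update_self _ _ _
      have hNj : (Function.update (Function.update M j' 0) i' (M i' + M j')) j' = 0 := by
        rw [Function.update_of_ne (Ne.symm hij), Function.update_self]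
      have hFE := FE (Function.update (Function.update M j' 0) i' (M i' + M j'))
      rw [hNi, hNj] at hFE
      have hU2N : U2 i' j' (Function.update (Function.update M j' 0) i' (M i' + M j')) = M := by
        funext t
        by_cases h1 : t = i'
        · subst h1; rw [U2_i, hNi, hj1, z11]
        · by_cases h2 : t = j'
          · subst h2; rw [U2_j _ _ hij, hNj, zero_add, hj1]
          · rw [U2_other _ _ _ _ h1 h2, Function.update_of_ne h1, Function.update_of_ne h2]
      rw [hU2N] at hFE
      rw [hj1] at hFE ⊢
      rcases z2cases (M i') with hi0 | hi1
      · rw [hi0] at hFE ⊢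
        simp only [zero_add, zero_mul, one_mul] at hFE ⊢
        rw [hFE, add_assoc]
      · rw [hi1] at hFE ⊢
        have h11 : (1 : ZMod 2) + 1 = 0 := rfl
        rw [h11] at hFE ⊢
        simp only [one_mul, zero_mul, add_zero] at hFE ⊢
        exact zfin _ _ _ _ _ _ K hFE

def U1 {n : ℕ} (j' : Fin n) (M : Fin n → ZMod 2) : Fin n → ZMod 2 :=
  Function.update M j' (M j' + 1)

lemma U1_j {n : ℕ} (j' : Fin n) (M : Fin n → ZMod 2) : U1 j' M j' = M j' + 1 :=
  Function.update_self _ _ _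

lemma U1_other {n : ℕ} (j' : Fin n) (M : Fin n → ZMod 2) (t : Fin n) (h : t ≠ j') :
    U1 j' M t = M t := Function.update_of_ne h _ _

lemma case_output {n : ℕ} (hn : 3 ≤ n) (f : (Fin n → Fin 4) → Fin 4)
    (hq : IsNQuasigroup f)
    (Λ : (Fin n → ZMod 2) → ZMod 2) (hf : ∀ x, f x = NF Λ x)
    (j' : Fin n) (μ ν : Equiv.Perm (Fin 4))
    (hμ : μ ≠ 1) (hν : ν ≠ 1) (hμν : ¬(μ = piEquiv ∧ ν = piEquiv))
    (heq : ∀ x : Fin n → Fin 4, μ (f x) = f (Function.update x j' (ν (x j')))) :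
    PermutablyReducible f := by
  classical
  have h0n : 0 < n := by omega
  have h1n : 1 < n := by omega
  have hlf : ∀ x, lmap (f x) = ∑ t, lmap (x t) := fun x => by rw [hf x]; exact lmap_enc _ _
  have hsf : ∀ x, smap (f x) = (∑ t, smap (x t)) + Λ (fun t => lmap (x t)) := fun x => by
    rw [hf x]; exact smap_enc _ _
  have HP : ∀ x : Fin n → Fin 4,
      lmap (μ (f x)) + lmap (f x) = lmap (ν (x j')) + lmap (x j') := by
    intro x
    have h1 := congrArg lmap (heq x)
    rw [hlf, sum_update lmap x j' (ν (x j'))] at h1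
    exact zout1 _ _ _ _ _ h1 (hlf x)
  have HQraw : ∀ x : Fin n → Fin 4,
      Λ (fun t => lmap (Function.update x j' (ν (x j')) t))
      = Λ (fun t => lmap (x t)) + (smap (μ (f x)) + smap (f x))
        + (smap (ν (x j')) + smap (x j')) := by
    intro x
    have h1 := congrArg smap (heq x)
    rw [hsf, sum_update smap x j' (ν (x j'))] at h1
    exact zout2 _ _ _ _ _ _ _ h1 (hsf x)
  obtain ⟨t0, ht0⟩ : ∃ t0 : Fin n, t0 ≠ j' := by
    by_cases h : (⟨0, h0n⟩ : Fin n) = j'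
    · refine ⟨⟨1, h1n⟩, fun hh => ?_⟩
      rw [← h] at hh
      exact absurd (congrArg Fin.val hh) (by simp)
    · exact ⟨⟨0, h0n⟩, h⟩
  have real : ∀ b c : Fin 4, ∃ x : Fin n → Fin 4, x j' = b ∧ f x = c := by
    intro b c
    obtain ⟨a0, ha0⟩ := (hq t0 (Function.update (fun _ => 0) j' b)).2 c
    refine ⟨Function.update (Function.update (fun _ => 0) j' b) t0 a0, ?_, ha0⟩
    rw [Function.update_of_ne (Ne.symm ht0), Function.update_self]
  have Hd : ∀ b c : Fin 4, lmap (μ c) + lmap c = lmap (ν b) + lmap b := by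
    intro b c
    obtain ⟨x, hxj, hxf⟩ := real b c
    have h := HP x
    rw [hxj, hxf] at h
    exact h
  have hdμ : ∀ c, lmap (μ c) + lmap c = lmap (ν 0) + lmap (0 : Fin 4) := fun c => Hd 0 c
  have hdν : ∀ b, lmap (ν b) + lmap b = lmap (ν 0) + lmap (0 : Fin 4) := fun b =>
    (Hd b 0).symm.trans (Hd 0 0)
  rcases z2cases (lmap (ν 0) + lmap (0 : Fin 4)) with hc0 | hc1
  · -- degenerate case
    exfalso
    have hMx : ∀ x : Fin n → Fin 4,
        (fun t => lmap (Function.update x j' (ν (x j')) t)) = fun t => lmap (x t) := by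
      intro x; funext t
      rw [Function.update_apply]
      by_cases h2 : t = j'
      · subst h2; rw [if_pos rfl]
        exact zB _ _ ((hdν (x t)).trans hc0)
      · rw [if_neg h2]
    have Hee : ∀ b c : Fin 4, (smap (μ c) + smap c) + (smap (ν b) + smap b) = 0 := by
      intro b c
      obtain ⟨x, hxj, hxf⟩ := real b c
      have h := HQraw x
      rw [hMx x, hxj, hxf] at h
      exact zres7 _ _ _ h
    have heμ : ∀ c, smap (μ c) + smap c = smap (ν 0) + smap (0 : Fin 4) := fun c =>
      zB _ _ (Hee 0 c)
    have heν : ∀ b, smap (ν b) + smap b = smap (ν 0) + smap (0 : Fin 4) := fun b =>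
      zres2 _ _ _ (Hee 0 0) (Hee b 0)
    rcases z2cases (smap (ν 0) + smap (0 : Fin 4)) with he0 | he1
    · apply hμ
      apply perm_id
      · intro a; show lmap (μ a) + lmap a = 0; rw [hdμ a, hc0]
      · intro a; show smap (μ a) + smap a = 0; rw [heμ a, he0]
    · apply hμν
      constructor
      · apply perm_pi
        · intro a; show lmap (μ a) + lmap a = 0; rw [hdμ a, hc0]
        · intro a; show smap (μ a) + smap a = 1; rw [heμ a, he1]
      · apply perm_pi
        · intro a; show lmap (ν a) + lmap a = 0; rw [hdν a, hc0]
        · intro a; show smap (ν a) + smap a = 1; rw [heν a, he1]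
  · -- main case
    have hdν1 : ∀ b, lmap (ν b) = lmap b + 1 := fun b => zres8 _ _ ((hdν b).trans hc1)
    have hArg : ∀ x : Fin n → Fin 4,
        (fun t => lmap (Function.update x j' (ν (x j')) t)) = U1 j' (fun t => lmap (x t)) := by
      intro x; funext t
      rw [Function.update_apply]
      by_cases h2 : t = j'
      · subst h2; rw [if_pos rfl, U1_j, hdν1]
      · rw [if_neg h2, U1_other _ _ _ h2]
    have HQ' : ∀ x : Fin n → Fin 4,
        Λ (U1 j' (fun t => lmap (x t)))
        = Λ (fun t => lmap (x t)) + (smap (μ (f x)) + smap (f x))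
          + (smap (ν (x j')) + smap (x j')) := by
      intro x; rw [← hArg x]; exact HQraw x
    have build : ∀ (M : Fin n → ZMod 2) (b : Fin 4), lmap b = M j' →
        ∃ x : Fin n → Fin 4, (fun t => lmap (x t)) = M ∧ x j' = b ∧
          (∑ t, smap (x t)) = smap b := by
      intro M b hb
      refine ⟨Function.update (fun t => enc (M t) 0) j' b, ?_, Function.update_self _ _ _, ?_⟩
      · funext t
        rw [Function.update_apply]
        by_cases h2 : t = j'
        · subst h2; rw [if_pos rfl]; exact hb
        · rw [if_neg h2]; exact lmap_enc _ 0
      · rw [sum_update smap (fun t => enc (M t) 0) j' b]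
        simp [smap_enc]
    have build1 : ∀ (M : Fin n → ZMod 2) (b : Fin 4), lmap b = M j' →
        ∃ x : Fin n → Fin 4, (fun t => lmap (x t)) = M ∧ x j' = b ∧
          (∑ t, smap (x t)) = smap b + 1 := by
      intro M b hb
      refine ⟨Function.update (Function.update (fun t => enc (M t) 0) j' b) t0 (enc (M t0) 1),
        ?_, ?_, ?_⟩
      · funext t
        rw [Function.update_apply]
        by_cases h1 : t = t0
        · subst h1; rw [if_pos rfl, lmap_enc]
        · rw [if_neg h1, Function.update_apply]
          by_cases h2 : t = j'
          · subst h2; rw [if_pos rfl]; exact hb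
          · rw [if_neg h2]; exact lmap_enc _ 0
      · rw [Function.update_of_ne (Ne.symm ht0), Function.update_self]
      · rw [sum_update smap _ t0 (enc (M t0) 1),
          sum_update smap (fun t => enc (M t) 0) j' b, Function.update_of_ne ht0]
        simp [smap_enc]
    have hfval : ∀ (M : Fin n → ZMod 2) (x : Fin n → Fin 4) (q : ZMod 2),
        (fun t => lmap (x t)) = M → (∑ t, smap (x t)) = q →
        f x = enc (∑ t, M t) (q + Λ M) := by
      intro M x q hxM hxs
      rw [hf x]
      show enc _ _ = _
      have h1 : ∑ t, lmap (x t) = ∑ t, M t := Finset.sum_congr rfl fun t _ => congrFun hxM t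
      rw [h1, hxs, hxM]
    have HL0 : ∀ (M : Fin n → ZMod 2) (b : Fin 4), lmap b = M j' →
        Λ (U1 j' M) = Λ M
          + (smap (μ (enc (∑ t, M t) (smap b + Λ M))) + smap (enc (∑ t, M t) (smap b + Λ M)))
          + (smap (ν b) + smap b) := by
      intro M b hb
      obtain ⟨x, hxM, hxj, hxs⟩ := build M b hb
      have h := HQ' x
      rw [hxM, hxj, hfval M x (smap b) hxM hxs] at h
      exact h
    have HL1 : ∀ (M : Fin n → ZMod 2) (b : Fin 4), lmap b = M j' →
        Λ (U1 j' M) = Λ M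
          + (smap (μ (enc (∑ t, M t) (smap b + 1 + Λ M))) + smap (enc (∑ t, M t) (smap b + 1 + Λ M)))
          + (smap (ν b) + smap b) := by
      intro M b hb
      obtain ⟨x, hxM, hxj, hxs⟩ := build1 M b hb
      have h := HQ' x
      rw [hxM, hxj, hfval M x (smap b + 1) hxM hxs] at h
      exact h
    have hEμwd : ∀ p q : ZMod 2, smap (μ (enc p q)) + smap (enc p q) = EE μ p := by
      have hflip : ∀ p : ZMod 2,
          smap (μ (enc p 0)) + smap (enc p 0) = smap (μ (enc p 1)) + smap (enc p 1) := by
        intro p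
        have hMj : (fun t : Fin n => if t = t0 then p else (0 : ZMod 2)) j' = 0 :=
          if_neg (Ne.symm ht0)
        have hsum : (∑ t : Fin n, if t = t0 then p else (0 : ZMod 2)) = p := by
          rw [Finset.sum_ite_eq' Finset.univ t0 (fun _ => p)]
          simp
        have h0 := HL0 (fun t : Fin n => if t = t0 then p else (0 : ZMod 2)) (enc 0 0)
          (by rw [lmap_enc]; exact hMj.symm)
        have h1 := HL1 (fun t : Fin n => if t = t0 then p else (0 : ZMod 2)) (enc 0 0)
          (by rw [lmap_enc]; exact hMj.symm)
        rw [hsum] at h0 h1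
        rw [show smap (enc (0 : ZMod 2) 0) = (0 : ZMod 2) from smap_enc 0 0] at h0 h1
        rw [zero_add] at h0 h1
        have h9 := zres9 _ _ _ _ _ h0 h1
        rcases z2cases (Λ fun t : Fin n => if t = t0 then p else (0 : ZMod 2)) with hL | hL
        · rw [hL, add_zero] at h9
          exact h9
        · rw [hL, show (1 : ZMod 2) + 1 = 0 from rfl] at h9
          exact h9.symm
      intro p q
      rcases z2cases q with hq' | hq'
      · rw [hq']; rfl
      · rw [hq', ← hflip p]; rfl
    have hEμ : ∀ a : Fin 4, smap (μ a) + smap a = EE μ (lmap a) := by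
      intro a
      have key := hEμwd (lmap a) (smap a)
      rw [enc_lmap_smap a] at key
      exact key
    have hEν : ∀ b : Fin 4, smap (ν b) + smap b = EE ν (lmap b) := by
      intro b
      have hMj : (fun t : Fin n => if t = j' then lmap b else (0 : ZMod 2)) j' = lmap b :=
        if_pos rfl
      have h0 := HL0 (fun t : Fin n => if t = j' then lmap b else (0 : ZMod 2)) b hMj.symm
      have h1 := HL0 (fun t : Fin n => if t = j' then lmap b else (0 : ZMod 2)) (enc (lmap b) 0)
        (by rw [lmap_enc]; exact hMj.symm)
      rw [hEμ, lmap_enc] at h0 h1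
      exact zres9b _ _ _ _ _ h0 h1
    have FE : ∀ M : Fin n → ZMod 2, Λ (U1 j' M) = Λ M + EE μ (∑ t, M t) + EE ν (M j') := by
      intro M
      have h0 := HL0 M (enc (M j') 0) (lmap_enc _ _)
      rw [hEμ, lmap_enc, hEν, lmap_enc] at h0
      exact h0
    have hn1 : n - 1 < n := by omega
    have hσlast : (Equiv.swap (⟨n - 1, hn1⟩ : Fin n) j') ⟨n - 1, hn1⟩ = j' :=
      Equiv.swap_apply_left _ _
    have hσsymmj : (Equiv.swap (⟨n - 1, hn1⟩ : Fin n) j').symm j' = ⟨n - 1, hn1⟩ := by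
      rw [Equiv.symm_swap]; exact Equiv.swap_apply_right _ _
    apply reducible_of_split f Λ hf (n - 1) (by omega) le_rfl (by omega)
      (Equiv.swap (⟨n - 1, hn1⟩ : Fin n) j')
      (fun v => Λ (fun t => if h : (((Equiv.swap (⟨n - 1, hn1⟩ : Fin n) j').symm t : Fin n) : ℕ) < n - 1
        then v ⟨(((Equiv.swap (⟨n - 1, hn1⟩ : Fin n) j').symm t : Fin n) : ℕ), h⟩ else 0))
      (fun p r => r ⟨0, by omega⟩ * (EE μ p + EE ν 0))
    intro M
    show Λ M =
      Λ (fun t => if h : (((Equiv.swap (⟨n - 1, hn1⟩ : Fin n) j').symm t : Fin n) : ℕ) < n - 1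
          then M ((Equiv.swap (⟨n - 1, hn1⟩ : Fin n) j')
            ⟨(((Equiv.swap (⟨n - 1, hn1⟩ : Fin n) j').symm t : Fin n) : ℕ),
              ((Equiv.swap (⟨n - 1, hn1⟩ : Fin n) j').symm t).isLt⟩)
          else 0)
        + M ((Equiv.swap (⟨n - 1, hn1⟩ : Fin n) j') ⟨n - 1, hn1⟩)
          * (EE μ (∑ k : Fin (n - 1), M ((Equiv.swap (⟨n - 1, hn1⟩ : Fin n) j')
              ⟨(k : ℕ), by have := k.isLt; omega⟩)) + EE ν 0)
    rw [hσlast]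
    have hNeq : (fun t => if h : (((Equiv.swap (⟨n - 1, hn1⟩ : Fin n) j').symm t : Fin n) : ℕ) < n - 1
          then M ((Equiv.swap (⟨n - 1, hn1⟩ : Fin n) j')
            ⟨(((Equiv.swap (⟨n - 1, hn1⟩ : Fin n) j').symm t : Fin n) : ℕ),
              ((Equiv.swap (⟨n - 1, hn1⟩ : Fin n) j').symm t).isLt⟩)
          else 0)
        = Function.update M j' 0 := by
      funext t
      by_cases h2 : t = j'
      · subst h2
        rw [Function.update_self, hσsymmj, dif_neg]
        intro h
        simp at h
      · rw [Function.update_of_ne h2]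
        have hs : (Equiv.swap (⟨n - 1, hn1⟩ : Fin n) j').symm t ≠ ⟨n - 1, hn1⟩ := by
          intro h
          exact h2 (((Equiv.symm_apply_eq _).mp h).trans hσlast)
        have hval : (((Equiv.swap (⟨n - 1, hn1⟩ : Fin n) j').symm t : Fin n) : ℕ) ≠ n - 1 :=
          fun h => hs (Fin.ext h)
        have hlt : (((Equiv.swap (⟨n - 1, hn1⟩ : Fin n) j').symm t : Fin n) : ℕ) < n - 1 := by
          have := ((Equiv.swap (⟨n - 1, hn1⟩ : Fin n) j').symm t).isLt
          omega
        rw [dif_pos hlt, Fin.eta, Equiv.apply_symm_apply]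
    rw [hNeq]
    have hS : (∑ t, Function.update M j' 0 t)
        = ∑ k : Fin (n - 1), M ((Equiv.swap (⟨n - 1, hn1⟩ : Fin n) j')
            ⟨(k : ℕ), by have := k.isLt; omega⟩) := by
      rw [← Equiv.sum_comp (Equiv.swap (⟨n - 1, hn1⟩ : Fin n) j')
        (fun t => Function.update M j' 0 t),
        sum_split (show n - 1 ≤ n by omega)
          (fun t => Function.update M j' 0 ((Equiv.swap (⟨n - 1, hn1⟩ : Fin n) j') t))]
      have hz : (∑ v : Fin (n - (n - 1)), Function.update M j' 0
          ((Equiv.swap (⟨n - 1, hn1⟩ : Fin n) j') ⟨n - 1 + (v : ℕ), by have := v.isLt; omega⟩)) = 0 := by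
        apply Finset.sum_eq_zero
        intro v _
        have hv : (⟨n - 1 + (v : ℕ), by have := v.isLt; omega⟩ : Fin n) = ⟨n - 1, hn1⟩ := by
          apply Fin.ext
          have := v.isLt
          simp only []
          omega
        rw [hv, hσlast, Function.update_self]
      rw [hz, add_zero]
      apply Finset.sum_congr rfl
      intro k _
      apply Function.update_of_ne
      intro h
      have h3 := (Equiv.swap (⟨n - 1, hn1⟩ : Fin n) j').injective (h.trans hσlast.symm)
      have h4 := congrArg Fin.val h3
      simp only [] at h4
      have := k.isLt
      omega
    rcases z2cases (M j') with hj0 | hj1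
    · rw [hj0, zero_mul, add_zero]
      have hupd : Function.update M j' (0 : ZMod 2) = M := by
        rw [show (0 : ZMod 2) = M j' from hj0.symm, Function.update_eq_self]
      rw [hupd]
    · have hFE := FE (Function.update M j' 0)
      rw [Function.update_self, hS] at hFE
      have hU1 : U1 j' (Function.update M j' 0) = M := by
        funext t
        by_cases h2 : t = j'
        · subst h2
          rw [U1_j, Function.update_self, zero_add, hj1]
        · rw [U1_other _ _ _ h2, Function.update_of_ne h2]
      rw [hU1] at hFE
      rw [hj1, one_mul]
      exact hFE.trans (add_assoc _ _ _)
end S14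


/-- Proposition 4.2(b): if the predicate of a standardly
semilinear `n`-quasigroup of order 4 (`n ≥ 3`) is invariant under applying
non-identity permutations `μ, ν` at two distinct places with `(μ,ν) ≠ (π,π)`,
then the quasigroup is permutably reducible. -/
theorem stmt14 {n : ℕ} (hn : 3 ≤ n) (f : (Fin n → Fin 4) → Fin 4)
    (hq : IsNQuasigroup f) (hs : StdSemilinear f)
    (i j : Fin (n + 1)) (hij : i ≠ j) (μ ν : Equiv.Perm (Fin 4))
    (hμ : μ ≠ 1) (hν : ν ≠ 1) (hμν : ¬(μ = piEquiv ∧ ν = piEquiv))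
    (hinv : ∀ z : Fin (n + 1) → Fin 4,
      (z 0 = f fun t : Fin n => z t.succ) ↔
      ((fun z' : Fin (n + 1) → Fin 4 => z' 0 = f fun t : Fin n => z' t.succ)
        (fun t => if t = i then μ (z t) else if t = j then ν (z t) else z t))) :
    PermutablyReducible f := by
  classical
  obtain ⟨Λ, hf⟩ := S14.nf_exists f hq hs
  have mkz : ∀ x : Fin n → Fin 4,
      (Fin.cons (f x) x : Fin (n + 1) → Fin 4) 0
        = f fun t => (Fin.cons (f x) x : Fin (n + 1) → Fin 4) t.succ := by
    intro x
    rw [Fin.cons_zero]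
    congr 1
  rcases Fin.eq_zero_or_eq_succ i with hi0 | ⟨i', hi'⟩
  · rcases Fin.eq_zero_or_eq_succ j with hj0 | ⟨j', hj'⟩
    · exact absurd (hi0.trans hj0.symm) hij
    · subst hi0; subst hj'
      apply S14.case_output hn f hq Λ hf j' μ ν hμ hν hμν
      intro x
      have h := (hinv (Fin.cons (f x) x)).mp (mkz x)
      simp only [Fin.cons_zero, Fin.cons_succ, if_pos rfl, Fin.succ_ne_zero, if_false,
        Fin.succ_inj] at h
      have harg : (fun t => if t = j' then ν (x t) else x t)
          = Function.update x j' (ν (x j')) := by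
        funext t
        rw [Function.update_apply]
        by_cases h2 : t = j'
        · subst h2; rw [if_pos rfl]
        · rw [if_neg h2, if_neg h2]
      rw [harg] at h
      exact h
  · rcases Fin.eq_zero_or_eq_succ j with hj0 | ⟨j', hj'⟩
    · subst hj0; subst hi'
      apply S14.case_output hn f hq Λ hf i' ν μ hν hμ (fun hc => hμν ⟨hc.2, hc.1⟩)
      intro x
      have h := (hinv (Fin.cons (f x) x)).mp (mkz x)
      simp only [Fin.cons_zero, Fin.cons_succ, if_pos rfl, Fin.succ_ne_zero, if_false,
        Fin.succ_inj] at h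
      have harg : (fun t => if t = i' then μ (x t) else x t)
          = Function.update x i' (μ (x i')) := by
        funext t
        rw [Function.update_apply]
        by_cases h2 : t = i'
        · subst h2; rw [if_pos rfl]
        · rw [if_neg h2, if_neg h2]
      rw [harg] at h
      exact h
    · subst hi'; subst hj'
      have hij' : i' ≠ j' := fun hc => hij (by rw [hc])
      apply S14.case_inputs hn f Λ hf i' j' hij' μ ν hμ hν hμν
      intro x
      have h := (hinv (Fin.cons (f x) x)).mp (mkz x)
      have e1 : (0 : Fin (n + 1)) ≠ Fin.succ i' := Ne.symm (Fin.succ_ne_zero i')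
      have e2 : (0 : Fin (n + 1)) ≠ Fin.succ j' := Ne.symm (Fin.succ_ne_zero j')
      simp only [Fin.cons_zero, Fin.cons_succ, Fin.succ_ne_zero, if_false,
        Fin.succ_inj, e1, e2] at h
      have harg : (fun t => if t = i' then μ (x t) else if t = j' then ν (x t) else x t)
          = Function.update (Function.update x j' (ν (x j'))) i' (μ (x i')) := by
        funext t
        rw [Function.update_apply, Function.update_apply]
        by_cases h1 : t = i'
        · subst h1; rw [if_pos rfl, if_pos rfl]
        · rw [if_neg h1, if_neg h1]
          by_cases h2 : t = j'
          · subst h2; rw [if_pos rfl]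
          · rw [if_neg h2, if_neg h2]
      rw [harg] at h
      exact h
end

section
/- Let s and t be binary quasigroups on Σ = {0,1,2,3}, sᵢ(x) := s(x,i), tᵢ(x) := t(x,i). Suppose s₀ = t₀ = id and for every i ∈ Σ, the permutation tᵢ ∘ sᵢ⁻¹ is either the identity or (1,0,3,2). Then either s = t, or there exists a permutation φ of Σ such that s′(x,y) := s(x, φ(y)) is a standardly semilinear binary quasigroup. -/

lemma zmod2_ne : ∀ x y : ZMod 2, x ≠ y → x = y + 1 := by decide

lemma lmap_pair : ∀ u v : Fin 4, lmap u = lmap v → u ≠ v → u = piPerm v := by decide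

lemma piPerm_ne : ∀ u : Fin 4, piPerm u ≠ u := by decide

lemma lmap_zero : lmap 0 = 0 := rfl

/-- Proposition 4.3: if binary quasigroups `s, t` on `{0,1,2,3}`
satisfy `s₀ = t₀ = id` (where `sᵢ(x) = s(x,i)`) and every `tᵢ ∘ sᵢ⁻¹` is the
identity or `(1,0,3,2)`, then `s = t` or `s′(x,y) = s(x,φ(y))` is standardly
semilinear for some permutation `φ`. -/
theorem stmt15 (s t : Fin 4 → Fin 4 → Fin 4)
    (hs : IsBinaryQG s) (ht : IsBinaryQG t)
    (hs0 : ∀ x, s x 0 = x) (ht0 : ∀ x, t x 0 = x)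
    (h : ∀ i : Fin 4, (∀ x, t x i = s x i) ∨ (∀ x, t x i = piPerm (s x i))) :
    s = t ∨ ∃ φ : Equiv.Perm (Fin 4),
      ∀ x y : Fin 4, lmap (s x (φ y)) = lmap x + lmap y := by
  by_cases hall : ∀ i x, t x i = s x i
  · left; funext x y; exact (hall y x).symm
  right
  push_neg at hall
  obtain ⟨i1, x1, hx1⟩ := hall
  have hi1 : ∀ x, t x i1 = piPerm (s x i1) := by
    rcases h i1 with h1 | h1
    · exact absurd (h1 x1) hx1
    · exact h1
  have lemA : ∀ i j : Fin 4, (∀ x, t x i = s x i) → (∀ x, t x j = piPerm (s x j)) →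
      ∀ a, lmap (s a i) ≠ lmap (s a j) := by
    intro i j hi hj a hlm
    have hij : i ≠ j := by
      rintro rfl
      exact piPerm_ne (s a i) ((hj a).symm.trans (hi a))
    by_cases hv : s a i = s a j
    · exact hij ((hs.1 a).injective hv)
    · have hpi : s a i = piPerm (s a j) := lmap_pair _ _ hlm hv
      have : t a i = t a j := by rw [hi, hj, hpi]
      exact hij ((ht.1 a).injective this)
  have h0 : ∀ x, t x 0 = s x 0 := by intro x; rw [ht0, hs0]
  have key1 : ∀ j : Fin 4, (∀ x, t x j = piPerm (s x j)) → ∀ a,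
      lmap (s a j) = lmap a + 1 := by
    intro j hj a
    have hne := lemA 0 j h0 hj a
    rw [hs0] at hne
    exact zmod2_ne _ _ (Ne.symm hne)
  have key : ∀ a i, lmap (s a i) = lmap a + lmap (s 0 i) := by
    intro a i
    rcases h i with hi | hi
    · have h1 := lemA i i1 hi hi1 a
      have h2 := lemA i i1 hi hi1 0
      rw [key1 i1 hi1 a] at h1
      rw [key1 i1 hi1 0] at h2
      have e1 : lmap (s a i) = lmap a := by
        have := zmod2_ne _ _ h1
        rw [this]; ring_nf; simp [CharTwo.two_eq_zero]
      have e2 : lmap (s 0 i) = 0 := by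
        have := zmod2_ne _ _ h2
        rw [this, lmap_zero]; ring_nf; simp [CharTwo.two_eq_zero]
      rw [e1, e2, add_zero]
    · rw [key1 i hi a, key1 i hi 0, lmap_zero, zero_add]
  refine ⟨(Equiv.ofBijective (s 0) (hs.1 0)).symm, ?_⟩
  intro x y
  rw [key]
  have hy : s 0 ((Equiv.ofBijective (s 0) (hs.1 0)).symm y) = y :=
    Equiv.ofBijective_apply_symm_apply _ _ _
  rw [hy]
end

section
/- Composition preserves standard semilinearity: if g is a standardly semilinear m-quasigroup and h is a standardly semilinear (n−m+1)-quasigroup of order 4, then the n-quasigroup f(x₁,…,xₙ) := h(g(x₁,…,x_m), x_{m+1},…,xₙ) is standardly semilinear. -/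
/-- composition preserves standard semilinearity: if `g` is a
standardly semilinear `m`-quasigroup and `h` a standardly semilinear
`(k+1)`-quasigroup of order 4, then `f(x₁,…,x_{m+k}) = h(g(x₁,…,x_m),x_{m+1},…)`
is a standardly semilinear `(m+k)`-quasigroup. -/
theorem stmt17 {m k : ℕ} (g : (Fin m → Fin 4) → Fin 4)
    (h : (Fin (k + 1) → Fin 4) → Fin 4)
    (hgq : IsNQuasigroup g) (hgs : StdSemilinear g)
    (hhq : IsNQuasigroup h) (hhs : StdSemilinear h)
    (f : (Fin (m + k) → Fin 4) → Fin 4)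
    (hf : ∀ x, f x = h (Fin.cons (g fun i : Fin m => x (Fin.castAdd k i))
      fun j : Fin k => x (Fin.natAdd m j))) :
    IsNQuasigroup f ∧ StdSemilinear f := by
  constructor
  · intro i x
    set y : Fin m → Fin 4 := fun t => x (Fin.castAdd k t) with hy
    set z : Fin k → Fin 4 := fun j => x (Fin.natAdd m j) with hz
    rcases lt_or_ge (i : ℕ) m with hi | hi
    · set i' : Fin m := ⟨i, hi⟩ with hi'
      have hio : Fin.castAdd k i' = i := by ext; simp [hi']
      have key : (fun a => f (Function.update x i a))
          = (fun b => h (Function.update (Fin.cons (g y) z) 0 b)) ∘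
            (fun a => g (Function.update y i' a)) := by
        funext a
        simp only [Function.comp, hf, Fin.update_cons_zero]
        have h1 : (fun t : Fin m => Function.update x i a (Fin.castAdd k t))
            = Function.update y i' a := by
          funext t
          by_cases ht : t = i'
          · subst ht; rw [hio, Function.update_self]; simp
          · have hne : Fin.castAdd k t ≠ i := by
              rw [← hio]; intro hc
              exact ht (Fin.castAdd_injective _ _ hc)
            simp [Function.update_of_ne ht, Function.update_of_ne hne, hy]
        have h2 : (fun j : Fin k => Function.update x i a (Fin.natAdd m j)) = z := by
          funext j
          have hne : Fin.natAdd m j ≠ i := by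
            intro hc
            have := congrArg Fin.val hc
            simp at this; omega
          simp [Function.update_of_ne hne, hz]
        rw [h1, h2]
      rw [key]
      exact (hhq 0 (Fin.cons (g y) z)).comp (hgq i' y)
    · have him : (i : ℕ) - m < k := by have := i.isLt; omega
      set i' : Fin k := ⟨(i : ℕ) - m, him⟩ with hi'
      have hio : Fin.natAdd m i' = i := by ext; simp [hi']; omega
      have key : (fun a => f (Function.update x i a))
          = fun a => h (Function.update (Fin.cons (g y) z) i'.succ a) := by
        funext a
        simp only [hf, ← Fin.cons_update]
        have h1 : (fun t : Fin m => Function.update x i a (Fin.castAdd k t)) = y := by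
          funext t
          have hne : Fin.castAdd k t ≠ i := by
            intro hc
            have := congrArg Fin.val hc
            simp at this; omega
          simp [Function.update_of_ne hne, hy]
        have h2 : (fun j : Fin k => Function.update x i a (Fin.natAdd m j))
            = Function.update z i' a := by
          funext j
          by_cases hj : j = i'
          · subst hj; rw [hio, Function.update_self]; simp
          · have hne : Fin.natAdd m j ≠ i := by
              rw [← hio]; intro hc
              have := congrArg Fin.val hc
              simp at this
              exact hj (Fin.ext this)
            simp [Function.update_of_ne hj, Function.update_of_ne hne, hz]
        rw [h1, h2]
      rw [key]
      exact hhq i'.succ (Fin.cons (g y) z)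
  · intro x
    rw [hf, hhs, Fin.sum_univ_succ]
    simp only [Fin.cons_zero, Fin.cons_succ]
    rw [hgs, Fin.sum_univ_add (f := fun i : Fin (m + k) => lmap (x i))]
end

section
/- For a standardly semilinear n-quasigroup f of order 4 and any fixed values b₁,…,bₙ ∈ {0,1}, consider the set H of points (x₀,…,xₙ) ∈ {0,1,2,3}^{n+1} with l(xᵢ) = bᵢ for i = 1,…,n (x₀ unconstrained). Then all points of H at which the predicate f⟨·⟩ equals 1 have coordinate sums x₀+⋯+xₙ of the same parity. -/
lemma pair_parity : ∀ a c : Fin 4, a ≠ c → lmap a = lmap c → (a.val + c.val) % 2 = 1 := by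
  decide

lemma step_parity {n : ℕ} (f : (Fin n → Fin 4) → Fin 4)
    (hq : IsNQuasigroup f) (hs : StdSemilinear f) (x : Fin n → Fin 4) (i : Fin n) (a : Fin 4)
    (hne : a ≠ x i) (hl : lmap a = lmap (x i)) :
    ((f x).val + ∑ j, (x j).val) % 2
      = ((f (Function.update x i a)).val + ∑ j, ((Function.update x i a) j).val) % 2 := by
  set x' := Function.update x i a with hx'
  have hfl : lmap (f x) = lmap (f x') := by
    rw [hs x, hs x']
    apply Finset.sum_congr rfl
    intro j _
    rcases eq_or_ne j i with rfl | hji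
    · rw [hx', Function.update_self, hl]
    · rw [hx', Function.update_of_ne hji]
  have hfne : f x ≠ f x' := by
    intro h
    have := (hq i x).injective (a₁ := x i) (a₂ := a) ?_
    · exact hne this.symm
    · simp only [Function.update_eq_self]
      exact h
  have h1 : ((f x).val + (f x').val) % 2 = 1 := pair_parity _ _ hfne hfl
  have h2 : ((x i).val + a.val) % 2 = 1 := pair_parity _ _ (Ne.symm hne) hl.symm
  have hsum : ∑ j, (x j).val = (x i).val + ∑ j ∈ Finset.univ.erase i, (x j).val :=
    (Finset.add_sum_erase _ _ (Finset.mem_univ i)).symm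
  have hsum' : ∑ j, (x' j).val = a.val + ∑ j ∈ Finset.univ.erase i, (x j).val := by
    rw [← Finset.add_sum_erase _ _ (Finset.mem_univ i), hx', Function.update_self]
    congr 1
    apply Finset.sum_congr rfl
    intro j hj
    rw [Function.update_of_ne (Finset.ne_of_mem_erase hj)]
  rw [hsum, hsum']
  omega

lemma key_parity {n : ℕ} (f : (Fin n → Fin 4) → Fin 4)
    (hq : IsNQuasigroup f) (hs : StdSemilinear f) :
    ∀ (k : ℕ) (x y : Fin n → Fin 4),
      (Finset.filter (fun i => x i ≠ y i) Finset.univ).card ≤ k →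
      (∀ i, lmap (x i) = lmap (y i)) →
      ((f x).val + ∑ j, (x j).val) % 2 = ((f y).val + ∑ j, (y j).val) % 2 := by
  intro k
  induction k with
  | zero =>
    intro x y hcard _
    have : x = y := by
      funext i
      by_contra hne
      have : i ∈ Finset.filter (fun i => x i ≠ y i) Finset.univ := by
        simp [hne]
      have := Finset.card_pos.mpr ⟨i, this⟩
      omega
    rw [this]
  | succ k ih =>
    intro x y hcard hl
    rcases Finset.eq_empty_or_nonempty (Finset.filter (fun i => x i ≠ y i) Finset.univ)
      with he | ⟨i, hi⟩
    · exact ih x y (by rw [he]; simp) hl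
    · have hne : x i ≠ y i := (Finset.mem_filter.mp hi).2
      have hstep := step_parity f hq hs x i (y i) (Ne.symm hne) (hl i).symm
      rw [hstep]
      apply ih
      · have hsub : Finset.filter (fun j => Function.update x i (y i) j ≠ y j) Finset.univ
            ⊆ (Finset.filter (fun j => x j ≠ y j) Finset.univ).erase i := by
          intro j hj
          have hj' := (Finset.mem_filter.mp hj).2
          rcases eq_or_ne j i with rfl | hji
          · rw [Function.update_self] at hj'
            exact absurd rfl hj'
          · rw [Function.update_of_ne hji] at hj'
            exact Finset.mem_erase.mpr ⟨hji, by simp [hj']⟩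
        have := Finset.card_le_card hsub
        have := Finset.card_erase_le (a := i)
          (s := Finset.filter (fun j => x j ≠ y j) Finset.univ)
        have hpos : 0 < (Finset.filter (fun j => x j ≠ y j) Finset.univ).card :=
          Finset.card_pos.mpr ⟨i, hi⟩
        have := Finset.card_erase_of_mem hi
        omega
      · intro j
        rcases eq_or_ne j i with rfl | hji
        · rw [Function.update_self]
        · rw [Function.update_of_ne hji]; exact hl j

/-- for a standardly semilinear `n`-quasigroup `f` of order 4 and
fixed values `b i = l(xᵢ)` (`i = 1,…,n`), all points of the corresponding set `H`
where the predicate of `f` equals 1 have coordinate sums of the same parity. -/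
theorem stmt18 {n : ℕ} (f : (Fin n → Fin 4) → Fin 4)
    (hq : IsNQuasigroup f) (hs : StdSemilinear f) (b : Fin n → ZMod 2)
    (z w : Fin (n + 1) → Fin 4)
    (hz : ∀ i : Fin n, lmap (z i.succ) = b i)
    (hw : ∀ i : Fin n, lmap (w i.succ) = b i)
    (hz1 : z 0 = f fun t : Fin n => z t.succ)
    (hw1 : w 0 = f fun t : Fin n => w t.succ) :
    (∑ t, (z t).val) % 2 = (∑ t, (w t).val) % 2 := by
  have hkey := key_parity f hq hs n (fun t => z t.succ) (fun t => w t.succ)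
    (le_trans (Finset.card_le_card (Finset.filter_subset _ _)) (by simp))
    (fun i => by rw [hz i, hw i])
  beta_reduce at hkey
  rw [Fin.sum_univ_succ, Fin.sum_univ_succ, hz1, hw1]
  omega
end

section
/- Every n-quasigroup of order 3 is isotopic to the n-ary group operation f(x₁,…,xₙ) = x₁ + ⋯ + xₙ mod 3, and the number of n-quasigroups of order 3 is 3 · 2ⁿ. -/
namespace Stmt19Aux

lemma L1 : ∀ g : ZMod 3 → ZMod 3, Function.Bijective g →
    ∀ a, g a = g 0 + (g 1 - g 0) * a := by decide

lemma L2 : ∀ r0 r1 : ZMod 3 → ZMod 3, Function.Bijective r0 → Function.Bijective r1 →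
    (∀ b, r0 b ≠ r1 b) → ∀ b, r1 b - r0 b = r1 0 - r0 0 := by decide

variable {n : ℕ}

def d (f : (Fin n → ZMod 3) → ZMod 3) (x : Fin n → ZMod 3) (i : Fin n) : ZMod 3 :=
  f (Function.update x i 1) - f (Function.update x i 0)

lemma d_update (f : (Fin n → ZMod 3) → ZMod 3) (hf : IsNQuasigroup f)
    (x : Fin n → ZMod 3) (i j : Fin n) (a : ZMod 3) :
    d f (Function.update x j a) i = d f x i := by
  by_cases hij : j = i
  · subst hij
    simp [d, Function.update_idem]
  · have hji : i ≠ j := fun h => hij h.symm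
    set r0 : ZMod 3 → ZMod 3 := fun b => f (Function.update (Function.update x i 0) j b) with hr0
    set r1 : ZMod 3 → ZMod 3 := fun b => f (Function.update (Function.update x i 1) j b) with hr1
    have hb0 : Function.Bijective r0 := hf j _
    have hb1 : Function.Bijective r1 := hf j _
    have hne : ∀ b, r0 b ≠ r1 b := by
      intro b h
      have h0 : Function.update (Function.update x i 0) j b
          = Function.update (Function.update x j b) i 0 := Function.update_comm hji 0 b x
      have h1 : Function.update (Function.update x i 1) j b
          = Function.update (Function.update x j b) i 1 := Function.update_comm hji 1 b x
      have := (hf i (Function.update x j b)).injective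
        (a₁ := 0) (a₂ := 1) (by rw [← h0, ← h1]; exact h)
      exact absurd this (by decide)
    have key := L2 r0 r1 hb0 hb1 hne
    have e1 : d f (Function.update x j a) i = r1 a - r0 a := by
      simp only [d, hr0, hr1]
      rw [Function.update_comm hji 1 a x, Function.update_comm hji 0 a x]
    have e2 : d f x i = r1 (x j) - r0 (x j) := by
      simp only [d, hr0, hr1]
      rw [Function.update_comm hji, Function.update_comm hji,
        Function.update_eq_self]
    rw [e1, e2, key a, key (x j)]

def eps (f : (Fin n → ZMod 3) → ZMod 3) (i : Fin n) : ZMod 3 := d f 0 i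

lemma d_const (f : (Fin n → ZMod 3) → ZMod 3) (hf : IsNQuasigroup f)
    (x : Fin n → ZMod 3) (i : Fin n) : d f x i = eps f i := by
  have H : ∀ s : Finset (Fin n), ∀ x : Fin n → ZMod 3,
      (∀ j ∉ s, x j = 0) → d f x i = d f 0 i := by
    intro s
    induction s using Finset.induction_on with
    | empty =>
      intro x hx
      have : x = 0 := funext fun j => hx j (Finset.notMem_empty j)
      rw [this]
    | @insert j s hjs ih =>
      intro x hx
      have hx' : ∀ k ∉ s, Function.update x j 0 k = 0 := by
        intro k hk
        by_cases hkj : k = j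
        · subst hkj; simp
        · rw [Function.update_of_ne hkj]
          exact hx k (by simp [hkj, hk])
      have : x = Function.update (Function.update x j 0) j (x j) := by
        simp [Function.update_idem]
      rw [this, d_update f hf _ i j, ih _ hx']
  exact H Finset.univ x (fun j hj => absurd (Finset.mem_univ j) hj)

lemma eps_ne_zero (f : (Fin n → ZMod 3) → ZMod 3) (hf : IsNQuasigroup f) (i : Fin n) :
    eps f i ≠ 0 := by
  intro h
  have h2 : f (Function.update 0 i 1) = f (Function.update 0 i 0) := by
    have := sub_eq_zero.mp h
    exact this
  have := (hf i 0).injective (a₁ := 1) (a₂ := 0) h2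
  exact absurd this (by decide)

lemma main_formula (f : (Fin n → ZMod 3) → ZMod 3) (hf : IsNQuasigroup f)
    (x : Fin n → ZMod 3) : f x = f 0 + ∑ i, eps f i * x i := by
  have H : ∀ s : Finset (Fin n), ∀ x : Fin n → ZMod 3,
      (∀ j ∉ s, x j = 0) → f x = f 0 + ∑ i ∈ s, eps f i * x i := by
    intro s
    induction s using Finset.induction_on with
    | empty =>
      intro x hx
      have : x = 0 := funext fun j => hx j (Finset.notMem_empty j)
      simp [this]
    | @insert j s hjs ih =>
      intro x hx
      set x' := Function.update x j 0 with hx'def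
      have hx' : ∀ k ∉ s, x' k = 0 := by
        intro k hk
        by_cases hkj : k = j
        · subst hkj; simp [x']
        · rw [hx'def, Function.update_of_ne hkj]
          exact hx k (by simp [hkj, hk])
      have hb : Function.Bijective (fun a => f (Function.update x' j a)) := hf j x'
      have key := L1 _ hb (x j)
      have e0 : Function.update x' j 0 = x' := by simp [x', Function.update_idem]
      have ex : Function.update x' j (x j) = x := by
        simp [x', Function.update_idem]
      have ed : f (Function.update x' j 1) - f (Function.update x' j 0) = eps f j := by
        have := d_const f hf x' j
        simpa [d] using this
      simp only [ex, e0] at key ed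
      rw [key, ed, ih x' hx', Finset.sum_insert hjs]
      have hsum : ∑ i ∈ s, eps f i * x' i = ∑ i ∈ s, eps f i * x i := by
        apply Finset.sum_congr rfl
        intro i his
        have : i ≠ j := fun h => hjs (h ▸ his)
        rw [hx'def, Function.update_of_ne this]
      rw [hsum]; ring
  exact H Finset.univ x (fun j hj => absurd (Finset.mem_univ j) hj)



lemma affine_qg {n : ℕ} (c : ZMod 3) (e : Fin n → ZMod 3) (he : ∀ i, e i ≠ 0) :
    IsNQuasigroup (fun x => c + ∑ i, e i * x i) := by
  intro i x
  have hform : ∀ a : ZMod 3, (c + ∑ j, e j * Function.update x i a j)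
      = (c + ∑ j ∈ (Finset.univ \ {i}), e j * x j) + e i * a := by
    intro a
    have hpt : ∀ j, e j * Function.update x i a j
        = Function.update (fun j => e j * x j) i (e i * a) j := by
      intro j; by_cases h : j = i
      · subst h; simp
      · simp [Function.update_of_ne h]
    rw [Finset.sum_congr rfl (fun j _ => hpt j),
      Finset.sum_update_of_mem (Finset.mem_univ i)]
    ring
  constructor
  · intro a b hab
    simp only [hform] at hab
    exact mul_left_cancel₀ (he i) (add_left_cancel hab)
  · intro y
    refine ⟨(e i)⁻¹ * (y - (c + ∑ j ∈ (Finset.univ \ {i}), e j * x j)), ?_⟩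
    simp only [hform]
    rw [mul_inv_cancel_left₀ (he i)]
    ring

def qgEquiv (n : ℕ) : {f : (Fin n → ZMod 3) → ZMod 3 // IsNQuasigroup f} ≃
    (ZMod 3 × (Fin n → {e : ZMod 3 // e ≠ 0})) where
  toFun f := (f.1 0, fun i => ⟨eps f.1 i, eps_ne_zero f.1 f.2 i⟩)
  invFun p := ⟨fun x => p.1 + ∑ i, (p.2 i).1 * x i,
    affine_qg p.1 _ (fun i => (p.2 i).2)⟩
  left_inv f := Subtype.ext (funext fun x => (main_formula f.1 f.2 x).symm)
  right_inv p := by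
    refine Prod.ext ?_ ?_
    · simp
    · funext i
      refine Subtype.ext ?_
      simp [eps, d, Function.update_apply, mul_ite, Finset.sum_ite_eq']

lemma card_lemma (n : ℕ) :
    Nat.card {f : (Fin n → ZMod 3) → ZMod 3 // IsNQuasigroup f} = 3 * 2 ^ n := by
  rw [Nat.card_congr (qgEquiv n)]
  have h2 : Fintype.card {e : ZMod 3 // e ≠ 0} = 2 := by decide
  simp [Nat.card_eq_fintype_card, Fintype.card_fun, h2]

end Stmt19Aux

/-- every `n`-quasigroup of order 3 is isotopic to
`x₁ + ⋯ + xₙ (mod 3)`, and there are exactly `3·2ⁿ` of them. -/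
theorem stmt19 (n : ℕ) :
    (∀ f : (Fin n → ZMod 3) → ZMod 3, IsNQuasigroup f →
      ∃ (τ₀ : Equiv.Perm (ZMod 3)) (τ : Fin n → Equiv.Perm (ZMod 3)),
        ∀ x : Fin n → ZMod 3, τ₀ (f x) = ∑ i, τ i (x i)) ∧
    Nat.card {f : (Fin n → ZMod 3) → ZMod 3 // IsNQuasigroup f} = 3 * 2 ^ n := by
  constructor
  · intro f hf
    refine ⟨Equiv.subRight (f 0),
      fun i => Equiv.mulLeft₀ (Stmt19Aux.eps f i) (Stmt19Aux.eps_ne_zero f hf i), ?_⟩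
    intro x
    simp [Stmt19Aux.main_formula f hf x]
  · exact Stmt19Aux.card_lemma n
end
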